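/- (Sufficiency of the KKT/zero-gap conditions.) Let Q be an n×n real symmetric positive semidefinite matrix, c ∈ ℝⁿ, A an m×n real matrix, and let l_v, u_v ∈ ℝⁿ with l_v ≤ u_v and l_c, u_c ∈ ℝᵐ with l_c ≤ u_c. Suppose x* ∈ ℝⁿ and y* ∈ ℝᵐ satisfy: (i) l_v ≤ x* ≤ u_v and l_c ≤ A x* ≤ u_c (primal feasibility), and (ii) with r* = Q x* + c + Aᵀ y*, the duality gap vanishes: (x*)ᵀQx* + cᵀx* + p(−r*; l_v, u_v) + p(y*; l_c, u_c) = 0. Then x* minimizes f(x) = (1/2)xᵀQx + cᵀx over the feasible set {x : l_v ≤ x ≤ u_v, l_c ≤ Ax ≤ u_c}. -/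

import Mathlib

open Matrix

/-- `p(z; l, u) = ⟨u, z⁺⟩ − ⟨l, z⁻⟩`, where `z⁺ = max(z, 0)` and `z⁻ = max(−z, 0)`
componentwise. -/
noncomputable def pSupport {m : ℕ} (z l u : Fin m → ℝ) : ℝ :=
  (u ⬝ᵥ fun i => max (z i) 0) - (l ⬝ᵥ fun i => max (-z i) 0)

lemma dot_le_pSupport {m : ℕ} (z l u x : Fin m → ℝ) (h1 : l ≤ x) (h2 : x ≤ u) :
    x ⬝ᵥ z ≤ pSupport z l u := by
  unfold pSupport dotProduct
  rw [← Finset.sum_sub_distrib]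
  apply Finset.sum_le_sum
  intro i _
  dsimp only
  rcases le_or_gt 0 (z i) with hz | hz
  · rw [max_eq_left hz, max_eq_right (by linarith)]
    have := mul_le_mul_of_nonneg_right (h2 i) hz
    linarith
  · rw [max_eq_right (le_of_lt hz), max_eq_left (by linarith)]
    have := mul_le_mul_of_nonneg_right (h1 i) (by linarith : (0:ℝ) ≤ -z i)
    nlinarith

/-- Sufficiency of the KKT/zero-gap conditions: if `x*` is primal feasible and,
with `r* = Qx* + c + Aᵀy*`, the duality gap vanishes
(`x*ᵀQx* + cᵀx* + p(−r*; l_v, u_v) + p(y*; l_c, u_c) = 0`), then `x*` minimizes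
`f(x) = (1/2)xᵀQx + cᵀx` over the feasible set. -/
theorem kkt_zero_gap_implies_optimal {n m : ℕ}
    (Q : Matrix (Fin n) (Fin n) ℝ) (hQ : Q.PosSemidef)
    (c : Fin n → ℝ) (A : Matrix (Fin m) (Fin n) ℝ)
    (lv uv : Fin n → ℝ) (hv : lv ≤ uv)
    (lc uc : Fin m → ℝ) (hc : lc ≤ uc)
    (xstar : Fin n → ℝ) (ystar : Fin m → ℝ)
    (h1 : lv ≤ xstar) (h2 : xstar ≤ uv)
    (h3 : lc ≤ A.mulVec xstar) (h4 : A.mulVec xstar ≤ uc)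
    (rstar : Fin n → ℝ) (hr : rstar = Q.mulVec xstar + c + Aᵀ.mulVec ystar)
    (hgap : xstar ⬝ᵥ Q.mulVec xstar + c ⬝ᵥ xstar
        + pSupport (-rstar) lv uv + pSupport ystar lc uc = 0) :
    ∀ x : Fin n → ℝ, lv ≤ x → x ≤ uv → lc ≤ A.mulVec x → A.mulVec x ≤ uc →
      (1 / 2) * (xstar ⬝ᵥ Q.mulVec xstar) + c ⬝ᵥ xstar
        ≤ (1 / 2) * (x ⬝ᵥ Q.mulVec x) + c ⬝ᵥ x := by
  intro x hx1 hx2 hx3 hx4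
  have h5 : x ⬝ᵥ (-rstar) ≤ pSupport (-rstar) lv uv := dot_le_pSupport _ _ _ _ hx1 hx2
  have h6 : (A.mulVec x) ⬝ᵥ ystar ≤ pSupport ystar lc uc := dot_le_pSupport _ _ _ _ hx3 hx4
  -- ⟨x, Aᵀ y⟩ = ⟨Ax, y⟩
  have hA : x ⬝ᵥ (Aᵀ.mulVec ystar) = (A.mulVec x) ⬝ᵥ ystar := by
    rw [Matrix.dotProduct_mulVec, Matrix.vecMul_transpose]
  have hx5 : x ⬝ᵥ (-rstar) = -(x ⬝ᵥ Q.mulVec xstar) - x ⬝ᵥ c - (A.mulVec x) ⬝ᵥ ystar := by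
    rw [hr, ← hA]
    simp [dotProduct_neg, dotProduct_add]
    ring
  have hcx : x ⬝ᵥ c = c ⬝ᵥ x := dotProduct_comm _ _
  -- key inequality: x*Qx* + c·x* ≤ x⬝Qx* + c⬝x
  have key : xstar ⬝ᵥ Q.mulVec xstar + c ⬝ᵥ xstar ≤ x ⬝ᵥ Q.mulVec xstar + c ⬝ᵥ x := by
    have := hgap
    rw [hx5, hcx] at h5
    linarith
  -- PSD part
  have hpsd : 0 ≤ (x - xstar) ⬝ᵥ Q.mulVec (x - xstar) := by
    have := hQ.dotProduct_mulVec_nonneg (x - xstar)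
    simpa [dotProduct, Matrix.mulVec] using this
  have hsymm : xstar ⬝ᵥ Q.mulVec x = x ⬝ᵥ Q.mulVec xstar := by
    have hQt : Qᵀ = Q := by
      ext i j
      have := congrFun (congrFun hQ.1.eq i) j
      simpa using this
    rw [Matrix.dotProduct_mulVec, ← Matrix.mulVec_transpose, hQt, dotProduct_comm]
  have hexp : (x - xstar) ⬝ᵥ Q.mulVec (x - xstar)
      = x ⬝ᵥ Q.mulVec x - x ⬝ᵥ Q.mulVec xstar - xstar ⬝ᵥ Q.mulVec x
        + xstar ⬝ᵥ Q.mulVec xstar := by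
    simp [Matrix.mulVec_sub, sub_dotProduct, dotProduct_sub]
    ring
  rw [hexp, hsymm] at hpsd
  linarith
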